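/- arXiv:1307.4457 — 3 statements merged into one kernel-verified Lean document; each statement's English description precedes it below -/
import Mathlib

section
/- Let $(\alpha^r)_{r\ge 1}$ be a sequence of nonnegative reals such that $\sum_{r=1}^\infty \alpha^r/r < \infty$ and there exists $\tau > 0$ with $|\alpha^{r+1} - \alpha^r| \le \tau/r$ for all $r \ge 1$. Then $\lim_{r\to\infty} \alpha^r = 0$. -/
set_option maxHeartbeats 800000


/-- If `α` is a nonnegative real sequence (indexed by `r ≥ 1`) with
`∑ α r / r < ∞` and `|α (r+1) - α r| ≤ τ / r` for some `τ > 0`, then `α → 0`. -/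
theorem stmt0 (α : ℕ → ℝ) (τ : ℝ) (hτ : 0 < τ)
    (hnonneg : ∀ r, 1 ≤ r → 0 ≤ α r)
    (hsum : Summable (fun r : ℕ => α (r + 1) / ((r : ℝ) + 1)))
    (hdiff : ∀ r : ℕ, 1 ≤ r → |α (r + 1) - α r| ≤ τ / (r : ℝ)) :
    Filter.Tendsto α Filter.atTop (nhds 0) := by
  have hf0 : ∀ k : ℕ, 0 ≤ α (k + 1) / ((k : ℝ) + 1) := fun k =>
    div_nonneg (hnonneg _ (by omega)) (by positivity)
  -- Lemma A: α (r + k) ≥ α r - k * τ / r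
  have hA : ∀ r : ℕ, 1 ≤ r → ∀ k : ℕ, α r - k * τ / r ≤ α (r + k) := by
    intro r hr k
    have hrpos : (0 : ℝ) < r := by exact_mod_cast hr
    induction k with
    | zero => simp
    | succ k ih =>
      have h1 := hdiff (r + k) (by omega)
      have hrk : (0 : ℝ) < (r : ℝ) + k := by positivity
      have h2 : α (r + k) - τ / ((r : ℝ) + k) ≤ α (r + k + 1) := by
        have := (abs_le.mp (by push_cast at h1 ⊢; exact h1)).1
        linarith
      have h3 : τ / ((r : ℝ) + k) ≤ τ / r :=
        div_le_div_of_nonneg_left hτ.le hrpos (le_add_of_nonneg_right (by positivity))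
      have key : α r - (k + 1 : ℝ) * τ / r ≤ α (r + (k + 1)) := by
        have : (k + 1 : ℝ) * τ / r = k * τ / r + τ / r := by ring
        rw [show r + (k + 1) = r + k + 1 from rfl]
        linarith
      push_cast
      push_cast at key
      convert key using 2
  rw [Metric.tendsto_atTop]
  intro ε hε
  set δ := ε / 2 * (ε / (2 * τ)) / (1 + ε / (2 * τ)) with hδdef
  have hδ : 0 < δ := by positivity
  have htail := tendsto_sum_nat_add (fun k : ℕ => α (k + 1) / ((k : ℝ) + 1))
  rw [Metric.tendsto_atTop] at htail
  obtain ⟨N, hN⟩ := htail δ hδ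
  refine ⟨max N 1 + 1, fun r hr => ?_⟩
  have hr1 : 1 ≤ r := by omega
  have hrpos : (0 : ℝ) < r := by exact_mod_cast hr1
  rw [Real.dist_eq, sub_zero, abs_of_nonneg (hnonneg r hr1)]
  by_contra hcon
  push_neg at hcon
  set m := ⌊ε * r / (2 * τ)⌋₊ with hmdef
  have hmub : (m : ℝ) ≤ ε * r / (2 * τ) := Nat.floor_le (by positivity)
  have hmlb : ε * r / (2 * τ) < (m : ℝ) + 1 := Nat.lt_floor_add_one _
  -- each term of the block is at least (ε/2)/(r+m)
  have hterm : ∀ k ∈ Finset.range (m + 1),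
      ε / 2 / ((r : ℝ) + m) ≤ α (r + k) / ((r : ℝ) + k) := by
    intro k hk
    rw [Finset.mem_range] at hk
    have hkm : (k : ℝ) ≤ m := by exact_mod_cast Nat.lt_succ_iff.mp hk
    have hk2 : (k : ℝ) * (2 * τ) ≤ ε * r :=
      (le_div_iff₀ (by positivity)).mp (hkm.trans hmub)
    have h1 : ε / 2 ≤ α (r + k) := by
      have hAk := hA r hr1 k
      have h2 : (k : ℝ) * τ / r ≤ ε / 2 := by
        rw [div_le_iff₀ hrpos]; nlinarith
      linarith
    exact div_le_div₀ (by linarith [hnonneg (r + k) (by omega)]) h1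
      (by positivity) (by push_cast; linarith)
  -- the block sum is at least δ
  have hblock : δ ≤ ∑ k ∈ Finset.range (m + 1), α (r + k) / ((r : ℝ) + k) := by
    have hcard := Finset.card_nsmul_le_sum (Finset.range (m + 1))
      (fun k => α (r + k) / ((r : ℝ) + k)) _ hterm
    rw [Finset.card_range, nsmul_eq_mul] at hcard
    refine le_trans ?_ (by push_cast at hcard ⊢; exact hcard)
    have key : δ = ε / 2 * (ε * r / (2 * τ)) / ((r : ℝ) + ε * r / (2 * τ)) := by
      rw [hδdef]
      have h1 : (1 : ℝ) + ε / (2 * τ) ≠ 0 := by positivity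
      have h2 : (r : ℝ) + ε * r / (2 * τ) ≠ 0 := by positivity
      field_simp
    calc δ = ε / 2 * (ε * r / (2 * τ)) / ((r : ℝ) + ε * r / (2 * τ)) := key
      _ ≤ ε / 2 * ((m : ℝ) + 1) / ((r : ℝ) + m) :=
          div_le_div₀ (by positivity) (by nlinarith) (by positivity) (by linarith)
      _ = ((m : ℝ) + 1) * (ε / 2 / ((r : ℝ) + m)) := by ring
  -- the block sum is at most the tail, which is < δ
  have htailbound : ∑ k ∈ Finset.range (m + 1), α (r + k) / ((r : ℝ) + k) < δ := by
    have hsum' : Summable (fun k : ℕ => α (k + (r - 1) + 1) / (((k + (r - 1) : ℕ) : ℝ) + 1)) :=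
      (summable_nat_add_iff (r - 1)).mpr hsum
    have hle : ∑ k ∈ Finset.range (m + 1), α (k + (r - 1) + 1) / (((k + (r - 1) : ℕ) : ℝ) + 1)
        ≤ ∑' k, α (k + (r - 1) + 1) / (((k + (r - 1) : ℕ) : ℝ) + 1) :=
      Summable.sum_le_tsum _ (fun k _ => hf0 _) hsum'
    have htl := hN (r - 1) (by omega)
    rw [Real.dist_eq, sub_zero] at htl
    have heq : ∀ k : ℕ, α (k + (r - 1) + 1) / (((k + (r - 1) : ℕ) : ℝ) + 1)
        = α (r + k) / ((r : ℝ) + k) := by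
      intro k
      have h1 : k + (r - 1) + 1 = r + k := by omega
      have h2 : (((k + (r - 1) : ℕ) : ℝ) + 1) = (r : ℝ) + k := by
        push_cast [Nat.cast_sub hr1]
        ring
      rw [h1, h2]
    calc ∑ k ∈ Finset.range (m + 1), α (r + k) / ((r : ℝ) + k)
        = ∑ k ∈ Finset.range (m + 1), α (k + (r - 1) + 1) / (((k + (r - 1) : ℕ) : ℝ) + 1) :=
          Finset.sum_congr rfl fun k _ => (heq k).symm
      _ ≤ _ := hle
      _ ≤ |∑' k, α (k + (r - 1) + 1) / (((k + (r - 1) : ℕ) : ℝ) + 1)| := le_abs_self _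
      _ < δ := htl
  linarith
end

section
/- Let $\hat g : \mathcal{X} \times \mathcal{X} \times \Xi \to \mathbb{R}$, and for each $r$ define $\hat f^r(x) = \frac{1}{r}\sum_{i=1}^r \hat g(x, x^{i-1}, \xi^i)$, where $x^r$ is a minimizer of $\hat f^r$ over $\mathcal{X}$. Suppose $\hat g(\cdot, y, \xi)$ is strongly convex in its first argument with uniform parameter $\gamma > 0$, and $\hat g(\cdot, y, \xi)$ is Lipschitz in its first argument with uniform constant $\theta' > 0$. Then $\|x^{r+1} - x^r\| \le \frac{2\theta'}{\gamma}\cdot\frac{1}{r+1}$ for all $r$, i.e., $\|x^{r+1} - x^r\| = O(1/r)$. -/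
/-!
Both `x^r` and `x^{r+1}` minimize `γ`-strongly convex functions, `f̂^r` and `f̂^{r+1}`, so each
function exceeds its minimum by at least `γ/2 ‖x^{r+1} - x^r‖²` at the other point; adding the two
inequalities gives `γ ‖x^{r+1} - x^r‖² ≤ |Δ(x^r) - Δ(x^{r+1})|` for `Δ = f̂^r - f̂^{r+1}`. Since
`Δ = (f̂^r - ĝ(·, x^r, ξ^{r+1})) / (r+1)` is a difference of two `θ'`-Lipschitz functions divided
by `r+1`, the right side is at most `2θ'/(r+1) · ‖x^{r+1} - x^r‖`.
-/

open Finset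

/-- The paper's `f̂^r`, for `f i = ĝ(·, x^i, ξ^{i+1})`. -/
noncomputable def runningAverage {α : Type*} (f : ℕ → α → ℝ) (r : ℕ) (z : α) : ℝ :=
  (1 / (r : ℝ)) * ∑ i ∈ range r, f i z

section RunningAverage

variable {α : Type*} {f : ℕ → α → ℝ} {r : ℕ}

lemma runningAverage_sub_runningAverage_succ (hr : r ≠ 0) (z : α) :
    runningAverage f r z - runningAverage f (r + 1) z =
      (runningAverage f r z - f r z) / ((r : ℝ) + 1) := by
  have hr' : (r : ℝ) ≠ 0 := Nat.cast_ne_zero.mpr hr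
  simp only [runningAverage, sum_range_succ, Nat.cast_succ]
  field_simp
  ring

lemma abs_runningAverage_sub_le {u v : α} {c : ℝ} (hr : r ≠ 0)
    (h : ∀ i < r, |f i u - f i v| ≤ c) :
    |runningAverage f r u - runningAverage f r v| ≤ c := by
  have hr' : (0 : ℝ) < r := Nat.cast_pos.mpr (Nat.pos_of_ne_zero hr)
  have hsum : |∑ i ∈ range r, (f i u - f i v)| ≤ r * c :=
    calc |∑ i ∈ range r, (f i u - f i v)| ≤ ∑ i ∈ range r, |f i u - f i v| :=
          abs_sum_le_sum_abs _ _
      _ ≤ ∑ _i ∈ range r, c := sum_le_sum fun i hi => h i (mem_range.mp hi)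
      _ = r * c := by rw [sum_const, card_range, nsmul_eq_mul]
  rw [runningAverage, runningAverage, ← mul_sub, ← sum_sub_distrib, abs_mul,
    abs_of_pos (one_div_pos.mpr hr'), one_div, inv_mul_le_iff₀ hr']
  exact hsum

lemma abs_runningAverage_sub_succ_sub_le {u v : α} {c : ℝ} (hr : r ≠ 0)
    (h : ∀ i ≤ r, |f i u - f i v| ≤ c) :
    |(runningAverage f r u - runningAverage f (r + 1) u) -
        (runningAverage f r v - runningAverage f (r + 1) v)| ≤ 2 * c / ((r : ℝ) + 1) := by
  have havg := abs_runningAverage_sub_le hr fun i hi => h i hi.le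
  have hlast := h r le_rfl
  rw [runningAverage_sub_runningAverage_succ hr, runningAverage_sub_runningAverage_succ hr,
    ← sub_div, abs_div, abs_of_pos (by positivity : (0 : ℝ) < r + 1)]
  gcongr
  calc |runningAverage f r u - f r u - (runningAverage f r v - f r v)|
      = |(runningAverage f r u - runningAverage f r v) - (f r u - f r v)| := by ring_nf
    _ ≤ |runningAverage f r u - runningAverage f r v| + |f r u - f r v| := abs_sub _ _
    _ ≤ 2 * c := by linarith

end RunningAverage

section StrongConvexity

variable {E : Type*} [NormedAddCommGroup E] [NormedSpace ℝ E] {X : Set E} {γ : ℝ}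

lemma StrongConvexOn.runningAverage {f : ℕ → E → ℝ} {r : ℕ} (hr : r ≠ 0)
    (hf : ∀ i < r, StrongConvexOn X γ (f i)) : StrongConvexOn X γ (runningAverage f r) := by
  refine ⟨(hf 0 (Nat.pos_of_ne_zero hr)).1, fun u hu v hv a b ha hb hab => ?_⟩
  have hr' : (r : ℝ) ≠ 0 := Nat.cast_ne_zero.mpr hr
  have hsum : ∑ i ∈ range r, f i (a • u + b • v) ≤
      ∑ i ∈ range r, (a * f i u + b * f i v - a * b * (γ / 2 * ‖u - v‖ ^ 2)) :=
    sum_le_sum fun i hi => (hf i (mem_range.mp hi)).2 hu hv ha hb hab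
  calc _ ≤ 1 / (r : ℝ) * ∑ i ∈ range r,
        (a * f i u + b * f i v - a * b * (γ / 2 * ‖u - v‖ ^ 2)) :=
        mul_le_mul_of_nonneg_left hsum (by positivity)
    _ = _ := by
      simp only [_root_.runningAverage, smul_eq_mul, sum_sub_distrib, sum_add_distrib,
        ← mul_sum, sum_const, card_range, nsmul_eq_mul]
      field_simp

lemma StrongConvexOn.add_sq_norm_sub_le_of_isMinOn {f : E → ℝ} {a z : E}
    (hf : StrongConvexOn X γ f) (ha : a ∈ X) (hz : z ∈ X) (hmin : IsMinOn f X a) :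
    f a + γ / 2 * ‖a - z‖ ^ 2 ≤ f z := by
  set c := γ / 2 * ‖a - z‖ ^ 2 with hc
  have hseg : ∀ t ∈ Set.Ioo (0 : ℝ) 1, (1 - t) * c ≤ f z - f a := by
    rintro t ⟨ht₀, ht₁⟩
    have hw : (1 - t) + t = 1 := sub_add_cancel 1 t
    have hconv := hf.2 ha hz (sub_nonneg.mpr ht₁.le) ht₀.le hw
    have hle := isMinOn_iff.mp hmin _ (hf.1 ha hz (sub_nonneg.mpr ht₁.le) ht₀.le hw)
    simp only [smul_eq_mul, ← hc] at hconv
    have : t * ((1 - t) * c) ≤ t * (f z - f a) := by linarith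
    exact le_of_mul_le_mul_left this ht₀
  -- let `t → 0` along the segment from `a` to `z`
  have hclosed : IsClosed {t : ℝ | (1 - t) * c ≤ f z - f a} :=
    isClosed_le (by fun_prop) continuous_const
  have h₀ : (0 : ℝ) ∈ closure (Set.Ioo 0 1) := by
    rw [closure_Ioo zero_ne_one]; exact Set.left_mem_Icc.mpr zero_le_one
  have : (1 - 0) * c ≤ f z - f a := hclosed.closure_subset_iff.mpr hseg h₀
  linarith

lemma StrongConvexOn.norm_sub_le_div_of_isMinOn {φ ψ : E → ℝ} {a b : E} {L : ℝ}
    (hφ : StrongConvexOn X γ φ) (hψ : StrongConvexOn X γ ψ) (hγ : 0 < γ) (hL : 0 ≤ L)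
    (ha : a ∈ X) (hb : b ∈ X) (hφa : IsMinOn φ X a) (hψb : IsMinOn ψ X b)
    (hdiff : |(φ a - ψ a) - (φ b - ψ b)| ≤ L * ‖a - b‖) :
    ‖a - b‖ ≤ L / γ := by
  have h₁ := hφ.add_sq_norm_sub_le_of_isMinOn ha hb hφa
  have h₂ := hψ.add_sq_norm_sub_le_of_isMinOn hb ha hψb
  rw [norm_sub_rev] at h₂
  have hsq : γ * ‖a - b‖ ^ 2 ≤ L * ‖a - b‖ := by
    linarith [neg_abs_le ((φ a - ψ a) - (φ b - ψ b))]
  rw [le_div_iff₀' hγ]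
  rcases (norm_nonneg (a - b)).eq_or_lt with hd | hd
  · rw [← hd, mul_zero]; exact hL
  · exact le_of_mul_le_mul_right (by linarith : γ * ‖a - b‖ * ‖a - b‖ ≤ L * ‖a - b‖) hd

end StrongConvexity

theorem stmt6_general {n : ℕ} {Ξ : Type*} (X : Set (EuclideanSpace ℝ (Fin n)))
    (ghat : EuclideanSpace ℝ (Fin n) → EuclideanSpace ℝ (Fin n) → Ξ → ℝ)
    (γ θ' : ℝ) (hγ : 0 < γ) (hθ' : 0 < θ')
    (hsc : ∀ (y : EuclideanSpace ℝ (Fin n)) (ξ : Ξ),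
      StrongConvexOn X γ (fun x => ghat x y ξ))
    (hlip : ∀ (y : EuclideanSpace ℝ (Fin n)) (ξ : Ξ), ∀ a ∈ X, ∀ b ∈ X,
      |ghat a y ξ - ghat b y ξ| ≤ θ' * ‖a - b‖)
    (x : ℕ → EuclideanSpace ℝ (Fin n)) (ξ : ℕ → Ξ)
    (hmin : ∀ r : ℕ, 1 ≤ r → x r ∈ X ∧ ∀ z ∈ X,
      (1 / (r : ℝ)) * ∑ i ∈ Finset.range r, ghat (x r) (x i) (ξ (i + 1)) ≤
      (1 / (r : ℝ)) * ∑ i ∈ Finset.range r, ghat z (x i) (ξ (i + 1))) :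
    ∀ r : ℕ, 1 ≤ r → ‖x (r + 1) - x r‖ ≤ 2 * θ' / γ * (1 / ((r : ℝ) + 1)) := by
  intro r hr
  set f : ℕ → EuclideanSpace ℝ (Fin n) → ℝ := fun i z => ghat z (x i) (ξ (i + 1))
  have hr0 : r ≠ 0 := Nat.one_le_iff_ne_zero.mp hr
  have hconv : ∀ m ≠ 0, StrongConvexOn X γ (runningAverage f m) :=
    fun m hm => StrongConvexOn.runningAverage hm fun i _ => hsc (x i) (ξ (i + 1))
  obtain ⟨ha, hmina⟩ := hmin r hr
  obtain ⟨hb, hminb⟩ := hmin (r + 1) (by omega)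
  have hstep := abs_runningAverage_sub_succ_sub_le (f := f) hr0
    fun i _ => hlip (x i) (ξ (i + 1)) (x r) ha (x (r + 1)) hb
  calc ‖x (r + 1) - x r‖ = ‖x r - x (r + 1)‖ := norm_sub_rev _ _
    _ ≤ 2 * θ' / ((r : ℝ) + 1) / γ :=
      (hconv r hr0).norm_sub_le_div_of_isMinOn (hconv (r + 1) r.succ_ne_zero) hγ
        (by positivity) ha hb (isMinOn_iff.mpr hmina) (isMinOn_iff.mpr hminb)
        (hstep.trans_eq (by ring))
    _ = 2 * θ' / γ * (1 / ((r : ℝ) + 1)) := by ring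

/-- SSUM iterates: if `ĝ(·, y, ξ)` is uniformly `γ`-strongly convex and uniformly
`θ'`-Lipschitz in its first argument, and `x^r` minimizes
`f̂^r(x) = (1/r) ∑_{i=1}^r ĝ(x, x^{i-1}, ξ^i)` over `𝒳`,
then `‖x^{r+1} - x^r‖ ≤ (2θ'/γ) · 1/(r+1)`. -/
theorem stmt6 {n : ℕ} {Ξ : Type*} (X : Set (EuclideanSpace ℝ (Fin n)))
    (hXconv : Convex ℝ X)
    (ghat : EuclideanSpace ℝ (Fin n) → EuclideanSpace ℝ (Fin n) → Ξ → ℝ)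
    (γ θ' : ℝ) (hγ : 0 < γ) (hθ' : 0 < θ')
    (hsc : ∀ (y : EuclideanSpace ℝ (Fin n)) (ξ : Ξ),
      StrongConvexOn X γ (fun x => ghat x y ξ))
    (hlip : ∀ (y : EuclideanSpace ℝ (Fin n)) (ξ : Ξ), ∀ a ∈ X, ∀ b ∈ X,
      |ghat a y ξ - ghat b y ξ| ≤ θ' * ‖a - b‖)
    (x : ℕ → EuclideanSpace ℝ (Fin n)) (ξ : ℕ → Ξ) (hx0 : x 0 ∈ X)
    (hmin : ∀ r : ℕ, 1 ≤ r → x r ∈ X ∧ ∀ z ∈ X,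
      (1 / (r : ℝ)) * ∑ i ∈ Finset.range r, ghat (x r) (x i) (ξ (i + 1)) ≤
      (1 / (r : ℝ)) * ∑ i ∈ Finset.range r, ghat z (x i) (ξ (i + 1))) :
    ∀ r : ℕ, 1 ≤ r → ‖x (r + 1) - x r‖ ≤ 2 * θ' / γ * (1 / ((r : ℝ) + 1)) :=
  stmt6_general X ghat γ θ' hγ hθ' hsc hlip x ξ hmin
end

section
/- With the SSUM notation, let $g : \mathcal{X}\times\Xi \to \mathbb{R}$ and $\hat g : \mathcal{X}\times\mathcal{X}\times\Xi\to\mathbb{R}$ satisfy $\hat g(y,y,\xi) = g(y,\xi)$ for all $y,\xi$. Define $\hat f^r(x) = \frac{1}{r}\sum_{i=1}^r \hat g(x,x^{i-1},\xi^i)$ where $x^r$ minimizes $\hat f^r$ over $\mathcal{X}$. Then $\hat f^{r+1}(x^{r+1}) - \hat f^r(x^r) \le \frac{g(x^r,\xi^{r+1}) - \hat f^r(x^r)}{r+1}$. -/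
open Finset

/-- Under the tightness condition `ĝ(y, y, ξ) = g(y, ξ)` and minimality of each
`x^r` for `f̂^r`, one has
`f̂^{r+1}(x^{r+1}) - f̂^r(x^r) ≤ (g(x^r, ξ^{r+1}) - f̂^r(x^r))/(r+1)`. -/
theorem stmt10 {n : ℕ} {Ξ : Type*} (X : Set (EuclideanSpace ℝ (Fin n)))
    (g : EuclideanSpace ℝ (Fin n) → Ξ → ℝ)
    (ghat : EuclideanSpace ℝ (Fin n) → EuclideanSpace ℝ (Fin n) → Ξ → ℝ)
    (htight : ∀ (y : EuclideanSpace ℝ (Fin n)) (ξ : Ξ), ghat y y ξ = g y ξ)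
    (x : ℕ → EuclideanSpace ℝ (Fin n)) (ξ : ℕ → Ξ)
    (hmin : ∀ r : ℕ, 1 ≤ r → x r ∈ X ∧ ∀ z ∈ X,
      (1 / (r : ℝ)) * ∑ i ∈ Finset.range r, ghat (x r) (x i) (ξ (i + 1)) ≤
      (1 / (r : ℝ)) * ∑ i ∈ Finset.range r, ghat z (x i) (ξ (i + 1))) :
    ∀ r : ℕ, 1 ≤ r →
      (1 / ((r : ℝ) + 1)) * ∑ i ∈ Finset.range (r + 1), ghat (x (r + 1)) (x i) (ξ (i + 1)) -
        (1 / (r : ℝ)) * ∑ i ∈ Finset.range r, ghat (x r) (x i) (ξ (i + 1))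
      ≤ (g (x r) (ξ (r + 1)) -
          (1 / (r : ℝ)) * ∑ i ∈ Finset.range r, ghat (x r) (x i) (ξ (i + 1))) / ((r : ℝ) + 1) := by
  intro r hr
  have hrpos : (0:ℝ) < r := by exact_mod_cast hr
  have hr1 : (0:ℝ) < (r:ℝ) + 1 := by linarith
  obtain ⟨hmem, _⟩ := hmin r hr
  obtain ⟨_, hminle⟩ := hmin (r+1) (by omega)
  have key := hminle (x r) hmem
  set S : ℝ := ∑ i ∈ Finset.range r, ghat (x r) (x i) (ξ (i + 1)) with hS
  have hsum : ∑ i ∈ Finset.range (r+1), ghat (x r) (x i) (ξ (i + 1))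
      = S + g (x r) (ξ (r+1)) := by
    rw [Finset.sum_range_succ, htight]
  push_cast at key
  rw [hsum] at key
  have : (1 / ((r:ℝ) + 1)) * ∑ i ∈ Finset.range (r + 1), ghat (x (r + 1)) (x i) (ξ (i + 1))
      ≤ (1 / ((r:ℝ) + 1)) * (S + g (x r) (ξ (r+1))) := key
  have goal : (1 / ((r:ℝ) + 1)) * (S + g (x r) (ξ (r+1))) - (1/(r:ℝ)) * S
      ≤ (g (x r) (ξ (r+1)) - (1/(r:ℝ)) * S) / ((r:ℝ) + 1) := by
    have : (1 / ((r:ℝ) + 1)) * (S + g (x r) (ξ (r+1))) - (1/(r:ℝ)) * S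
        = (g (x r) (ξ (r+1)) - (1/(r:ℝ)) * S) / ((r:ℝ) + 1) := by
      field_simp
      ring
    linarith [this.le]
  linarith
end
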